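/- Let U ⊆ ℂ^n be open and let ρ : U → ℝ be a C² function with ρ < 0 on U and with everywhere nonnegative Levi form (L_ρ(x; v) ≥ 0 for all x ∈ U, v ∈ ℂ^n). Set ψ := −log(−ρ). Then for every x ∈ U and every v ∈ ℂ^n one has L_ψ(x; v) ≥ |∂ψ(x)(v)|². (This pointwise Levi-form inequality is the key estimate in the paper's proof that the complement of a closed complete pluripolar set carries a complete Kähler metric, Theorem 5.1.) -/

import Mathlib

open MeasureTheory Metric Complex Set ENNReal

noncomputable section

/-- Lebesgue measure on `ℂⁿ` (with its Euclidean metric structure). -/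
noncomputable instance (n : ℕ) : MeasureSpace (EuclideanSpace ℂ (Fin n)) :=
  { volume := Measure.map (MeasurableEquiv.toLp 2 (Fin n → ℂ)) volume }

instance (n : ℕ) : BorelSpace (EuclideanSpace ℂ (Fin n)) :=
  inferInstance

/-- The canonical extension of a nonpositive-infinity-allowing value to `ℝ≥0∞`:
`⊤ ↦ ⊤`, `⊥ ↦ 0`, reals to `ENNReal.ofReal`. -/
def EReal.toENNReal' (x : EReal) : ℝ≥0∞ :=
  if x = ⊤ then ⊤ else ENNReal.ofReal x.toReal

/-- The integral of an `EReal`-valued function: upper part minus lower part,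
computed with Lebesgue upper integrals and `EReal` subtraction. -/
def eIntegral {α : Type*} [MeasurableSpace α] (μ : Measure α) (f : α → EReal) : EReal :=
  ((∫⁻ a, (f a).toENNReal' ∂μ : ℝ≥0∞) : EReal) - ((∫⁻ a, (-(f a)).toENNReal' ∂μ : ℝ≥0∞) : EReal)

/-- `e^x ∈ [0,∞]` for `x ∈ [-∞,∞]`. -/
def eexp (x : EReal) : ℝ≥0∞ :=
  if x = ⊤ then ⊤ else if x = ⊥ then 0 else ENNReal.ofReal (Real.exp x.toReal)

/-- A function `u : ℂⁿ → [-∞,∞)` is plurisubharmonic on an open set `U` if it is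
upper semicontinuous on `U`, takes the value `⊤` nowhere on `U`, is not identically `⊥`
on any connected component of `U`, and satisfies the sub-mean value inequality on every
sufficiently small circle in every complex direction. -/
def IsPSH {n : ℕ} (U : Set (EuclideanSpace ℂ (Fin n))) (u : EuclideanSpace ℂ (Fin n) → EReal) :
    Prop :=
  UpperSemicontinuousOn u U ∧
  (∀ x ∈ U, u x ≠ ⊤) ∧
  (∀ x ∈ U, ∃ y ∈ connectedComponentIn U x, u y ≠ ⊥) ∧
  ∀ a ∈ U, ∀ b : EuclideanSpace ℂ (Fin n), ∃ r₀ > (0:ℝ), ∀ r : ℝ, 0 < r → r < r₀ →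
    (∀ θ : ℝ, a + ((r : ℂ) * Complex.exp (θ * Complex.I)) • b ∈ U) ∧
    u a ≤ (((2 * Real.pi)⁻¹ : ℝ) : EReal) *
      eIntegral (volume.restrict (Set.Ioc (0:ℝ) (2 * Real.pi)))
        (fun θ : ℝ => u (a + ((r : ℂ) * Complex.exp (θ * Complex.I)) • b))

/-- A set `E`, closed in an open set `Ω ⊆ ℂⁿ`, is complete pluripolar in `Ω` if every point
of `E` has an open neighborhood `U ⊆ Ω` carrying a plurisubharmonic function `φ` with
`E ∩ U = φ⁻¹(-∞)`. -/
def CompletePluripolarIn {n : ℕ} (Ω E : Set (EuclideanSpace ℂ (Fin n))) : Prop :=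
  ∀ x ∈ E, ∃ U : Set (EuclideanSpace ℂ (Fin n)), IsOpen U ∧ x ∈ U ∧ U ⊆ Ω ∧
    ∃ φ : EuclideanSpace ℂ (Fin n) → EReal, IsPSH U φ ∧ E ∩ U = {y ∈ U | φ y = ⊥}

/-- A bounded pseudoconvex domain in `ℂⁿ`: a bounded nonempty connected open set on which
`z ↦ -log dist(z, ℂⁿ ∖ Ω)` is plurisubharmonic. -/
def BoundedPseudoconvexDomain {n : ℕ} (Ω : Set (EuclideanSpace ℂ (Fin n))) : Prop :=
  IsOpen Ω ∧ IsConnected Ω ∧ Bornology.IsBounded Ω ∧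
  IsPSH Ω (fun z => ((-Real.log (Metric.infDist z Ωᶜ) : ℝ) : EReal))

/-- The Levi form of a real-valued function `u` on `ℂⁿ` at `x` in direction `v`:
`(1/4)` times the Laplacian at `w = 0` of `w ↦ u (x + w v)`. -/
def Levi {n : ℕ} (u : EuclideanSpace ℂ (Fin n) → ℝ) (x v : EuclideanSpace ℂ (Fin n)) : ℝ :=
  ((fderiv ℝ (fun w : ℂ => fderiv ℝ (fun w' : ℂ => u (x + w' • v)) w) 0) 1 1 +
   (fderiv ℝ (fun w : ℂ => fderiv ℝ (fun w' : ℂ => u (x + w' • v)) w) 0) Complex.I Complex.I) / 4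

/-- The `(1,0)`-differential `∂u(x)(v) = Σⱼ (∂u/∂zⱼ)(x) vⱼ` of a real-valued function `u`
on `ℂⁿ`, computed as `∂g/∂w (0) = (1/2)(∂ₓg - i ∂_y g)(0)` for `g(w) = u(x + w v)`. -/
def del1 {n : ℕ} (u : EuclideanSpace ℂ (Fin n) → ℝ) (x v : EuclideanSpace ℂ (Fin n)) : ℂ :=
  (((fderiv ℝ (fun w : ℂ => u (x + w • v)) 0) 1 : ℝ) -
    Complex.I * ((fderiv ℝ (fun w : ℂ => u (x + w • v)) 0) Complex.I : ℝ)) / 2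

/-! On each complex line `w ↦ x + w v`, `ψ = φ ∘ ρ` with `φ t = -log (-t)`, and the chain rule
gives `L_ψ = φ'(ρ) L_ρ + φ''(ρ) |∂ρ|²` and `∂ψ = φ'(ρ) ∂ρ`. Since `φ'' = φ'²`, the second term is
exactly `|∂ψ|²`, while the first is nonnegative because `φ'(ρ) = -1/ρ > 0`. -/

open Topology

theorem hasDerivAt_neg_log_neg {t : ℝ} (ht : t ≠ 0) :
    HasDerivAt (fun s => -Real.log (-s)) (-t⁻¹) t := by
  refine ((Real.hasDerivAt_log (neg_ne_zero.mpr ht)).comp t (hasDerivAt_neg t)).fun_neg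
    |>.congr_deriv ?_
  rw [inv_neg]
  ring

theorem HasFDerivAt.neg_log_neg {E : Type*} [NormedAddCommGroup E] [NormedSpace ℝ E]
    {f : E → ℝ} {f' : E →L[ℝ] ℝ} {x : E} (hf : HasFDerivAt f f' x) (hx : f x ≠ 0) :
    HasFDerivAt (fun y => -Real.log (-f y)) ((-(f x)⁻¹) • f') x :=
  (hasDerivAt_neg_log_neg hx).comp_hasFDerivAt x hf

theorem fderiv_fderiv_neg_log_neg {E : Type*} [NormedAddCommGroup E] [NormedSpace ℝ E]
    {f : E → ℝ} {x : E} (hf : ContDiffAt ℝ 2 f x) (hx : f x ≠ 0) :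
    fderiv ℝ (fderiv ℝ fun y => -Real.log (-f y)) x =
      (-(f x)⁻¹) • fderiv ℝ (fderiv ℝ f) x +
        ((f x ^ 2)⁻¹ • fderiv ℝ f x).smulRight (fderiv ℝ f x) := by
  have hdiff : ∀ᶠ y in 𝓝 x, f y ≠ 0 ∧ DifferentiableAt ℝ f y := by
    filter_upwards [hf.continuousAt.eventually_ne hx, hf.eventually (by simp)] with y hy hfy
    exact ⟨hy, hfy.differentiableAt two_ne_zero⟩
  have hfderiv : (fderiv ℝ fun y => -Real.log (-f y)) =ᶠ[𝓝 x]
      fun y => (-(f y)⁻¹) • fderiv ℝ f y := by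
    filter_upwards [hdiff] with y ⟨hy, hfy⟩
    exact (hfy.hasFDerivAt.neg_log_neg hy).fderiv
  have hcoeff : HasFDerivAt (fun y => -(f y)⁻¹) ((f x ^ 2)⁻¹ • fderiv ℝ f x) x := by
    have hinv : HasDerivAt (fun t : ℝ => -t⁻¹) (f x ^ 2)⁻¹ (f x) := by
      refine (hasDerivAt_inv hx).fun_neg.congr_deriv ?_
      rw [neg_neg]
    exact hinv.comp_hasFDerivAt x (hf.differentiableAt two_ne_zero).hasFDerivAt
  have hf' : HasFDerivAt (fderiv ℝ f) (fderiv ℝ (fderiv ℝ f) x) x :=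
    ((hf.fderiv_right (m := 1) le_rfl).differentiableAt one_ne_zero).hasFDerivAt
  rw [hfderiv.fderiv_eq]
  exact (hcoeff.smul hf').fderiv

def quarterLaplacian (g : ℂ → ℝ) (z : ℂ) : ℝ :=
  (fderiv ℝ (fderiv ℝ g) z 1 1 + fderiv ℝ (fderiv ℝ g) z I I) / 4

def wirtingerDeriv (g : ℂ → ℝ) (z : ℂ) : ℂ :=
  ((fderiv ℝ g z 1 : ℝ) - I * (fderiv ℝ g z I : ℝ)) / 2

theorem Levi_eq_quarterLaplacian {n : ℕ} (u : EuclideanSpace ℂ (Fin n) → ℝ)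
    (x v : EuclideanSpace ℂ (Fin n)) :
    Levi u x v = quarterLaplacian (fun w => u (x + w • v)) 0 :=
  rfl

theorem del1_eq_wirtingerDeriv {n : ℕ} (u : EuclideanSpace ℂ (Fin n) → ℝ)
    (x v : EuclideanSpace ℂ (Fin n)) :
    del1 u x v = wirtingerDeriv (fun w => u (x + w • v)) 0 :=
  rfl

theorem norm_wirtingerDeriv_sq (g : ℂ → ℝ) (z : ℂ) :
    ‖wirtingerDeriv g z‖ ^ 2 = (fderiv ℝ g z 1 ^ 2 + fderiv ℝ g z I ^ 2) / 4 := by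
  rw [wirtingerDeriv, Complex.sq_norm, map_div₀, Complex.normSq_apply]
  simp only [sub_re, ofReal_re, mul_re, I_re, zero_mul, I_im, ofReal_im, mul_zero, sub_self,
    sub_zero, sub_im, mul_im, one_mul, zero_add, zero_sub, mul_neg, neg_mul, neg_neg, normSq_ofNat]
  ring

theorem quarterLaplacian_neg_log_neg {g : ℂ → ℝ} {z : ℂ} (hg : ContDiffAt ℝ 2 g z)
    (hz : g z ≠ 0) :
    quarterLaplacian (fun w => -Real.log (-g w)) z =
      -(g z)⁻¹ * quarterLaplacian g z + ‖wirtingerDeriv (fun w => -Real.log (-g w)) z‖ ^ 2 := by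
  have hfderiv := ((hg.differentiableAt two_ne_zero).hasFDerivAt.neg_log_neg hz).fderiv
  rw [norm_wirtingerDeriv_sq, hfderiv, quarterLaplacian, quarterLaplacian,
    fderiv_fderiv_neg_log_neg hg hz]
  simp only [add_apply, smul_apply, ContinuousLinearMap.smulRight_apply, smul_eq_mul]
  field_simp
  ring

/-- The key Levi-form estimate in the proof of Theorem 5.1: if `ρ < 0` is `C²` with nonnegative
Levi form on an open set `U ⊆ ℂⁿ`, then `ψ := -log(-ρ)` satisfies
`L_ψ(x; v) ≥ |∂ψ(x)(v)|²` at every point `x ∈ U` in every direction `v`. -/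
theorem levi_form_lower_bound_neg_log
    {n : ℕ} (U : Set (EuclideanSpace ℂ (Fin n))) (hU : IsOpen U)
    (ρ : EuclideanSpace ℂ (Fin n) → ℝ) (hρC2 : ContDiffOn ℝ 2 ρ U)
    (hρneg : ∀ x ∈ U, ρ x < 0)
    (hρpsh : ∀ x ∈ U, ∀ v : EuclideanSpace ℂ (Fin n), 0 ≤ Levi ρ x v)
    (ψ : EuclideanSpace ℂ (Fin n) → ℝ) (hψ : ∀ x, ψ x = -Real.log (-ρ x)) :
    ∀ x ∈ U, ∀ v : EuclideanSpace ℂ (Fin n), ‖del1 ψ x v‖ ^ 2 ≤ Levi ψ x v := by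
  intro x hx v
  have hx0 : x + (0 : ℂ) • v = x := by simp
  have hslice : ContDiffAt ℝ 2 (fun w : ℂ => ρ (x + w • v)) 0 :=
    (hx0 ▸ hρC2.contDiffAt (hU.mem_nhds hx)).comp 0 (by fun_prop)
  have hψslice : (fun w : ℂ => ψ (x + w • v)) = fun w => -Real.log (-ρ (x + w • v)) :=
    funext fun w => hψ _
  have hρLevi : 0 ≤ -(ρ x)⁻¹ * Levi ρ x v :=
    mul_nonneg (neg_nonneg.mpr (inv_nonpos.mpr (hρneg x hx).le)) (hρpsh x hx v)
  rw [Levi_eq_quarterLaplacian, del1_eq_wirtingerDeriv, hψslice,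
    quarterLaplacian_neg_log_neg hslice (by rw [hx0]; exact (hρneg x hx).ne), hx0]
  exact le_add_of_nonneg_left hρLevi

end
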